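/- Let G be a finite connected simple graph with n ≥ 1 vertices and let k ≥ 1. Let G' be the simple graph obtained from G by adding new vertices x, x', x_1, …, x_{n²}, adding an edge from x to every other vertex of G' except x', and adding an edge from x' to every other vertex of G' except x. Then the number of cocircuits of G' of size n² + n + k equals 2^{n²+1} times the number of cuts of G of size k. -/

import Mathlib

open SimpleGraph

/-- The crossing set `δ(X,Y)` of a pair of vertex sets: the edges of `G` with one
endpoint in `X` and the other in `Y`. -/
def crossSet {V : Type*} (G : SimpleGraph V) (X Y : Set V) : Set (Sym2 V) :=
  {e | e ∈ G.edgeSet ∧ ∃ a ∈ X, ∃ b ∈ Y, e = s(a, b)}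

/-- `(X, Y)` is a cut: a partition of the vertex set into two nonempty shores. -/
def IsCutPair {V : Type*} (X Y : Set V) : Prop :=
  X.Nonempty ∧ Y.Nonempty ∧ X ∩ Y = ∅ ∧ X ∪ Y = Set.univ

/-- `(X, Y)` is a cocircuit: a cut such that no proper subset of its crossing set is
the crossing set of a cut. -/
def IsCocircuitPair {V : Type*} (G : SimpleGraph V) (X Y : Set V) : Prop :=
  IsCutPair X Y ∧ ∀ X' Y' : Set V, IsCutPair X' Y' → ¬ crossSet G X' Y' ⊂ crossSet G X Y

/-- The number of cocircuits of `G`; a cocircuit is an unordered pair of shores,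
represented as an element of `Sym2 (Set V)`. -/
noncomputable def numCocircuits {V : Type*} (G : SimpleGraph V) : ℕ :=
  Nat.card {p : Sym2 (Set V) // ∃ X Y : Set V, p = s(X, Y) ∧ IsCocircuitPair G X Y}

/-- The number of cocircuits of `G` of size `k`. -/
noncomputable def numCocircuitsOfSize {V : Type*} (G : SimpleGraph V) (k : ℕ) : ℕ :=
  Nat.card {p : Sym2 (Set V) // ∃ X Y : Set V,
    p = s(X, Y) ∧ IsCocircuitPair G X Y ∧ (crossSet G X Y).ncard = k}

/-- A convex two-colouring of `G`: both colour classes induce connected subgraphs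
(the empty induced subgraph counts as connected). -/
def ConvexTwoColouring {V : Type*} (G : SimpleGraph V) (f : V → Fin 2) : Prop :=
  (G.induce (f ⁻¹' {0})).Preconnected ∧ (G.induce (f ⁻¹' {1})).Preconnected

/-- Vertex set of the extended graph `G'`: the vertices of `G` together with the new
vertices `x, x'` and `x₁, …, x_{n²}`. -/
abbrev ExtV (V : Type*) (n : ℕ) : Type _ := V ⊕ (Fin 2 ⊕ Fin (n ^ 2))

/-- The new vertex `x`. -/
def extX {V : Type*} {n : ℕ} : ExtV V n := Sum.inr (Sum.inl 0)

/-- The new vertex `x'`. -/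
def extX' {V : Type*} {n : ℕ} : ExtV V n := Sum.inr (Sum.inl 1)

/-- The new vertex `x_j` for `j ∈ {1, …, n²}`. -/
def extAux {V : Type*} {n : ℕ} (j : Fin (n ^ 2)) : ExtV V n := Sum.inr (Sum.inr j)

/-- The extended graph `G'`: it keeps all edges of `G`, and in addition `x` is joined
to every other vertex except `x'`, and `x'` is joined to every other vertex except
`x`. -/
def extGraph {V : Type*} (G : SimpleGraph V) (n : ℕ) : SimpleGraph (ExtV V n) :=
  SimpleGraph.fromEdgeSet
    ((Sym2.map Sum.inl '' G.edgeSet) ∪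
      {d : Sym2 (ExtV V n) | ∃ w : ExtV V n, w ≠ extX ∧ w ≠ extX' ∧
        (d = s(extX, w) ∨ d = s(extX', w))})

/-!
If `x ∈ X` and `x' ∉ X`, then `(X, Xᶜ)` is a cocircuit of `G'`, because `x` and `x'` are adjacent
to every other vertex of their shores. Its crossing edges are the edges of `G` crossing
`(X ∩ V, Xᶜ ∩ V)` together with, for each of the `n² + n` vertices `w ≠ x, x'`, the one edge from
`w` to whichever of `x`, `x'` lies on the other side. If instead `x, x' ∈ X`, minimality forces `Xᶜ` to be a single
vertex `x_j` or to lie inside `V`, and either way the cocircuit has at most `n² + n` edges. So the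
cocircuits of size `n² + n + k` are given by a side for each `x_j` and an ordered cut of `G` of
size `k`, and each unordered cut of `G` has two orderings.
-/

open Set

section Cuts

variable {α : Type*} {G : SimpleGraph α} {X Y : Set α}

lemma crossSet_comm (G : SimpleGraph α) (X Y : Set α) : crossSet G X Y = crossSet G Y X := by
  ext e
  constructor <;> rintro ⟨he, a, ha, b, hb, rfl⟩ <;> exact ⟨he, b, hb, a, ha, Sym2.eq_swap⟩

lemma mem_crossSet_compl {a b : α} : s(a, b) ∈ crossSet G X Xᶜ ↔ G.Adj a b ∧ (a ∈ X ↔ b ∉ X) := by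
  simp only [crossSet, mem_ofPred_eq, mem_edgeSet, mem_compl_iff, Sym2.eq_iff]
  constructor
  · rintro ⟨hab, p, hp, q, hq, ⟨rfl, rfl⟩ | ⟨rfl, rfl⟩⟩ <;> exact ⟨hab, by tauto⟩
  · rintro ⟨hab, h⟩
    by_cases ha : a ∈ X
    · exact ⟨hab, a, ha, b, h.1 ha, by tauto⟩
    · exact ⟨hab, b, by tauto, a, ha, by tauto⟩

lemma IsCutPair.eq_compl (h : IsCutPair X Y) : Y = Xᶜ :=
  (IsCompl.of_eq h.2.2.1 h.2.2.2).compl_eq.symm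

lemma IsCutPair.symm (h : IsCutPair X Y) : IsCutPair Y X :=
  ⟨h.2.1, h.1, by rw [inter_comm, h.2.2.1], by rw [union_comm, h.2.2.2]⟩

lemma isCutPair_compl_iff : IsCutPair X Xᶜ ↔ X.Nonempty ∧ Xᶜ.Nonempty := by
  simp [IsCutPair]

lemma IsCocircuitPair.symm (h : IsCocircuitPair G X Y) : IsCocircuitPair G Y X :=
  ⟨h.1.symm, fun X' Y' hc => crossSet_comm G Y X ▸ h.2 X' Y' hc⟩

lemma isCutPair_compl_of_crossSet_nonempty (h : (crossSet G X Xᶜ).Nonempty) :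
    IsCutPair X Xᶜ := by
  obtain ⟨_, -, a, ha, b, hb, -⟩ := h
  exact isCutPair_compl_iff.2 ⟨⟨a, ha⟩, ⟨b, hb⟩⟩

lemma mem_iff_mem_of_crossSet_subset {X' : Set α} {u w : α}
    (hsub : crossSet G X' X'ᶜ ⊆ crossSet G X Xᶜ) (hadj : G.Adj u w) (hX : u ∈ X ↔ w ∈ X) :
    w ∈ X' ↔ u ∈ X' := by
  by_contra h
  have := mem_crossSet_compl.1 (hsub (mem_crossSet_compl.2 ⟨hadj, by tauto⟩))
  tauto

lemma isCocircuitPair_compl_of_dominating {u u' : α} (hu : u ∈ X) (hu' : u' ∉ X)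
    (hX : ∀ w ∈ X, w ≠ u → G.Adj u w) (hXc : ∀ w ∉ X, w ≠ u' → G.Adj u' w) :
    IsCocircuitPair G X Xᶜ := by
  refine ⟨isCutPair_compl_iff.2 ⟨⟨u, hu⟩, ⟨u', hu'⟩⟩, fun X' Y' hcut hss => ?_⟩
  obtain rfl := hcut.eq_compl
  have hin : ∀ w ∈ X, w ∈ X' ↔ u ∈ X' := fun w hw => by
    rcases eq_or_ne w u with rfl | hwu
    · rfl
    · exact mem_iff_mem_of_crossSet_subset hss.subset (hX w hw hwu) (iff_of_true hu hw)
  have hout : ∀ w ∉ X, w ∈ X' ↔ u' ∈ X' := fun w hw => by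
    rcases eq_or_ne w u' with rfl | hwu
    · rfl
    · exact mem_iff_mem_of_crossSet_subset hss.subset (hXc w hw hwu) (iff_of_false hu' hw)
  have huu' : u ∈ X' ↔ u' ∉ X' := by
    obtain ⟨⟨a, ha⟩, ⟨b, hb⟩, -⟩ := hcut
    have := hin a; have := hout a; have := hin b; have := hout b
    rw [mem_compl_iff] at hb
    by_cases a ∈ X <;> by_cases b ∈ X <;> tauto
  refine hss.not_subset fun e he => ?_
  induction e using Sym2.ind with
  | h a b =>
    rw [mem_crossSet_compl] at he ⊢
    refine ⟨he.1, ?_⟩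
    by_cases ha : a ∈ X
    · rw [hin a ha, hout b (he.2.1 ha), huu']
    · rw [hout a ha, hin b (not_not.1 (mt he.2.2 ha)), huu']
      tauto

lemma IsCocircuitPair.crossSet_subset_incidenceSet {y : α} (h : IsCocircuitPair G X Y)
    (hy : y ∈ Y) (hnbr : ∀ w, G.Adj y w → w ∈ X) : crossSet G X Y ⊆ G.incidenceSet y := by
  obtain ⟨hcut, hmin⟩ := h
  obtain rfl := hcut.eq_compl
  obtain ⟨x, hx⟩ := hcut.1
  have hstar : IsCutPair {y}ᶜ ({y}ᶜᶜ : Set α) :=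
    isCutPair_compl_iff.2 ⟨⟨x, fun h => hy (h ▸ hx)⟩, ⟨y, by simp⟩⟩
  have hsub : crossSet G {y}ᶜ {y}ᶜᶜ ⊆ crossSet G X Xᶜ := by
    refine fun e he => ?_
    induction e using Sym2.ind with
    | h a b =>
      simp only [mem_crossSet_compl, mem_compl_iff, mem_singleton_iff, not_not] at he ⊢
      refine ⟨he.1, ?_⟩
      by_cases hb : b = y
      · subst hb
        exact iff_of_true (hnbr a he.1.symm) hy
      · obtain rfl : a = y := by tauto
        exact iff_of_false hy (not_not.2 (hnbr b he.1))
  refine (of_not_not (mt hsub.ssubset_of_not_subset (hmin _ _ hstar))).trans fun e he => ?_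
  induction e using Sym2.ind with
  | h a b =>
    simp only [mem_crossSet_compl, mem_compl_iff, mem_singleton_iff, not_not] at he
    exact (G.mk'_mem_incidenceSet_iff).2 ⟨he.1, by tauto⟩

end Cuts

section Counting

variable {α : Type*}

lemma card_sym2_eq_card_mem (P : Set α → Set α → Prop) (hP : ∀ X Y, P X Y → Y = Xᶜ)
    (hsymm : ∀ X Y, P X Y → P Y X) (c : α) :
    Nat.card {p : Sym2 (Set α) // ∃ X Y, p = s(X, Y) ∧ P X Y} =
      Nat.card {X : Set α // c ∈ X ∧ P X Xᶜ} := by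
  refine (Nat.card_eq_of_bijective (fun X => ⟨s(X.1, X.1ᶜ), X.1, X.1ᶜ, rfl, X.2.2⟩)
    ⟨fun X X' h => ?_, fun ⟨p, X, Y, hp, hXY⟩ => ?_⟩).symm
  · rcases Sym2.eq_iff.1 (congrArg Subtype.val h) with ⟨h, -⟩ | ⟨h, -⟩
    · exact Subtype.ext h
    · exact absurd X'.2.1 (h ▸ X.2.1 :)
  · obtain rfl := hP X Y hXY
    by_cases hc : c ∈ X
    · exact ⟨⟨X, hc, hXY⟩, Subtype.ext hp.symm⟩
    · refine ⟨⟨Xᶜ, hc, by simpa using hsymm _ _ hXY⟩, Subtype.ext ?_⟩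
      simp [hp, Sym2.eq_swap]

lemma card_eq_two_mul_card_mem (P : Set α → Prop) (hP : ∀ X, P X → P Xᶜ) (c : α) :
    Nat.card {X : Set α // P X} = 2 * Nat.card {X : Set α // c ∈ X ∧ P X} := by
  classical
  rw [← Fintype.card_bool, ← Nat.card_eq_fintype_card, ← Nat.card_prod]
  refine Nat.card_congr
    { toFun := fun X => if hc : c ∈ X.1 then (true, ⟨X, hc, X.2⟩)
        else (false, ⟨X.1ᶜ, hc, hP _ X.2⟩)
      invFun := fun bX => if bX.1 then ⟨bX.2, bX.2.2.2⟩ else ⟨bX.2.1ᶜ, hP _ bX.2.2.2⟩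
      left_inv := fun X => by by_cases hc : c ∈ X.1 <;> simp [hc]
      right_inv := fun ⟨b, X⟩ => by cases b <;> simp [X.2.1] }

end Counting

section Extension

variable {V : Type*} {G : SimpleGraph V} {n : ℕ}

@[elab_as_elim]
lemma ExtV.cases {motive : ExtV V n → Prop} (inl : ∀ a, motive (Sum.inl a))
    (x : motive extX) (x' : motive extX') (aux : ∀ j, motive (extAux j)) (w : ExtV V n) :
    motive w := by
  rcases w with a | (i | j)
  · exact inl a
  · fin_cases i
    exacts [x, x']
  · exact aux j

lemma extX_ne_extX' : (extX : ExtV V n) ≠ extX' := by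
  simp [extX, extX']

lemma extGraph_adj_inl {a b : V} :
    (extGraph G n).Adj (Sum.inl a) (Sum.inl b) ↔ G.Adj a b := by
  rw [extGraph, fromEdgeSet_adj, mem_union, ← Sym2.map_mk,
    (Sym2.map.injective Sum.inl_injective).mem_set_image]
  simpa [extX, extX'] using fun h => h.ne

lemma extGraph_adj_extX {w : ExtV V n} : (extGraph G n).Adj extX w ↔ w ≠ extX ∧ w ≠ extX' := by
  cases w using ExtV.cases <;> simp [extGraph, extX, extX', extAux, Sym2.exists]

lemma extGraph_adj_extX' {w : ExtV V n} :
    (extGraph G n).Adj extX' w ↔ w ≠ extX ∧ w ≠ extX' := by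
  cases w using ExtV.cases <;> simp [extGraph, extX, extX', extAux, Sym2.exists]

lemma extGraph_adj_extAux {j : Fin (n ^ 2)} {w : ExtV V n} :
    (extGraph G n).Adj (extAux j) w ↔ w = extX ∨ w = extX' := by
  cases w using ExtV.cases <;> simp [extGraph, extX, extX', extAux, Sym2.exists]

lemma isCocircuitPair_extGraph {X : Set (ExtV V n)} (hx : extX ∈ X) (hx' : extX' ∉ X) :
    IsCocircuitPair (extGraph G n) X Xᶜ :=
  isCocircuitPair_compl_of_dominating hx hx'
    (fun _ hw hne => extGraph_adj_extX.2 ⟨hne, fun h => hx' (h ▸ hw)⟩)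
    (fun _ hw hne => extGraph_adj_extX'.2 ⟨fun h => hw (h ▸ hx), hne⟩)

lemma preimage_crossSet_extGraph (X : Set (ExtV V n)) :
    Sym2.map Sum.inl ⁻¹' crossSet (extGraph G n) X Xᶜ =
      crossSet G (Sum.inl ⁻¹' X) (Sum.inl ⁻¹' X)ᶜ := by
  ext e
  induction e using Sym2.ind with
  | h a b => simp [mem_crossSet_compl, extGraph_adj_inl]

lemma mem_range_map_inl_of_extGraph_adj {p q : ExtV V n} (h : (extGraph G n).Adj p q)
    (hp : p ≠ extX ∧ p ≠ extX') (hq : q ≠ extX ∧ q ≠ extX') :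
    s(p, q) ∈ range (Sym2.map Sum.inl) := by
  cases p using ExtV.cases with
  | inl a =>
    cases q using ExtV.cases with
    | inl b => exact ⟨s(a, b), rfl⟩
    | x => exact absurd rfl hq.1
    | x' => exact absurd rfl hq.2
    | aux j => exact absurd (extGraph_adj_extAux.1 h.symm) (not_or.2 hp)
  | x => exact absurd rfl hp.1
  | x' => exact absurd rfl hp.2
  | aux j => exact absurd (extGraph_adj_extAux.1 h) (not_or.2 hq)

lemma ite_mem_eq_of_crossing {X : Set (ExtV V n)} [DecidablePred (· ∈ X)] (hx : extX ∈ X)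
    (hx' : extX' ∉ X) {p q : ExtV V n} (hp : p = extX ∨ p = extX') (hpq : p ∈ X ↔ q ∉ X) :
    (if q ∈ X then extX' else extX) = p := by
  rcases hp with rfl | rfl <;> by_cases q ∈ X <;> simp_all

lemma exists_eq_of_mem_crossSet_extGraph_of_notMem_range {X : Set (ExtV V n)}
    [DecidablePred (· ∈ X)] (hx : extX ∈ X) (hx' : extX' ∉ X) {e : Sym2 (ExtV V n)}
    (he : e ∈ crossSet (extGraph G n) X Xᶜ) (hne : e ∉ range (Sym2.map Sum.inl)) :
    ∃ w ∈ ({extX, extX'}ᶜ : Set (ExtV V n)), s(w, if w ∈ X then extX' else extX) = e := by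
  induction e using Sym2.ind with
  | h p q =>
    obtain ⟨hadj, hside⟩ := mem_crossSet_compl.1 he
    by_cases hp : p = extX ∨ p = extX'
    · refine ⟨q, ?_, by rw [ite_mem_eq_of_crossing hx hx' hp hside, Sym2.eq_swap]⟩
      rcases hp with rfl | rfl
      · simpa using extGraph_adj_extX.1 hadj
      · simpa using extGraph_adj_extX'.1 hadj
    by_cases hq : q = extX ∨ q = extX'
    · refine ⟨p, ?_, by rw [ite_mem_eq_of_crossing hx hx' hq (by tauto)]⟩
      rcases hq with rfl | rfl
      · simpa using extGraph_adj_extX.1 hadj.symm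
      · simpa using extGraph_adj_extX'.1 hadj.symm
    exact absurd (mem_range_map_inl_of_extGraph_adj hadj (not_or.1 hp) (not_or.1 hq)) hne

lemma ncard_crossSet_extGraph_sdiff_range {X : Set (ExtV V n)} (hx : extX ∈ X)
    (hx' : extX' ∉ X) :
    (crossSet (extGraph G n) X Xᶜ \ range (Sym2.map Sum.inl)).ncard =
      ({extX, extX'}ᶜ : Set (ExtV V n)).ncard := by
  classical
  symm
  refine ncard_congr (fun w _ => s(w, if w ∈ X then extX' else extX)) ?_ ?_ ?_
  · intro w hw
    obtain ⟨hwx, hwx'⟩ : w ≠ extX ∧ w ≠ extX' := by simpa [not_or] using hw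
    refine ⟨mem_crossSet_compl.2 ?_, ?_⟩
    · split_ifs with h
      · exact ⟨(extGraph_adj_extX'.2 ⟨hwx, hwx'⟩).symm, iff_of_true h hx'⟩
      · exact ⟨(extGraph_adj_extX.2 ⟨hwx, hwx'⟩).symm, iff_of_false h (not_not.2 hx)⟩
    · rintro ⟨e, he⟩
      obtain ⟨a, -, ha⟩ := Sym2.mem_map.1 (he ▸ Sym2.mem_mk_right _ _)
      split_ifs at ha <;> simp [extX, extX'] at ha
  · intro w w' hw _ h
    rcases Sym2.eq_iff.1 h with ⟨h, -⟩ | ⟨h, -⟩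
    · exact h
    · refine absurd ?_ hw
      split_ifs at h <;> simp [h]
  · intro e he
    obtain ⟨w, hw, rfl⟩ := exists_eq_of_mem_crossSet_extGraph_of_notMem_range hx hx' he.1 he.2
    exact ⟨w, hw, rfl⟩

lemma ncard_crossSet_extGraph [Fintype V] {X : Set (ExtV V n)} (hx : extX ∈ X)
    (hx' : extX' ∉ X) :
    (crossSet (extGraph G n) X Xᶜ).ncard =
      n ^ 2 + Fintype.card V + (crossSet G (Sum.inl ⁻¹' X) (Sum.inl ⁻¹' X)ᶜ).ncard := by
  have hinl : (crossSet (extGraph G n) X Xᶜ ∩ range (Sym2.map Sum.inl)).ncard =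
      (crossSet G (Sum.inl ⁻¹' X) (Sum.inl ⁻¹' X)ᶜ).ncard := by
    rw [← image_preimage_eq_inter_range, preimage_crossSet_extGraph,
      ncard_image_of_injective _ (Sym2.map.injective Sum.inl_injective)]
  have hhub : ({extX, extX'}ᶜ : Set (ExtV V n)).ncard = n ^ 2 + Fintype.card V := by
    rw [ncard_compl, ncard_pair extX_ne_extX', Nat.card_eq_fintype_card]
    simp
    omega
  rw [← ncard_inter_add_ncard_sdiff_eq_ncard _ (range (Sym2.map Sum.inl)), hinl,
    ncard_crossSet_extGraph_sdiff_range hx hx', hhub, add_comm]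

lemma extAux_injective : Function.Injective (extAux : Fin (n ^ 2) → ExtV V n) :=
  fun i j h => by simpa [extAux] using h

lemma ncard_crossSet_extGraph_le_two {X : Set (ExtV V n)}
    (h : IsCocircuitPair (extGraph G n) X Xᶜ) (hx : extX ∈ X) (hx' : extX' ∈ X)
    {j : Fin (n ^ 2)} (hj : extAux j ∉ X) : (crossSet (extGraph G n) X Xᶜ).ncard ≤ 2 := by
  have hsub := h.crossSet_subset_incidenceSet hj fun w hw => by
    rcases extGraph_adj_extAux.1 hw with rfl | rfl
    exacts [hx, hx']
  have hinc : (extGraph G n).incidenceSet (extAux j) ⊆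
      {s(extAux j, extX), s(extAux j, extX')} := by
    intro e he
    induction e using Sym2.ind with
    | h a b =>
      obtain ⟨hab, rfl | rfl⟩ := (mk'_mem_incidenceSet_iff _).1 he
      · rcases extGraph_adj_extAux.1 hab with rfl | rfl <;> simp
      · rcases extGraph_adj_extAux.1 hab.symm with rfl | rfl <;> simp [Sym2.eq_swap]
  calc (crossSet (extGraph G n) X Xᶜ).ncard
      ≤ ({s(extAux j, extX), s(extAux j, extX')} : Set (Sym2 (ExtV V n))).ncard :=
        ncard_le_ncard (hsub.trans hinc)
    _ ≤ 2 := (ncard_insert_le _ _).trans (by simp)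

lemma ncard_crossSet_extGraph_le_of_forall_extAux_mem [Fintype V] (hn : Fintype.card V = n)
    {X : Set (ExtV V n)} (hx : extX ∈ X) (hx' : extX' ∈ X) (haux : ∀ j, extAux j ∈ X) :
    (crossSet (extGraph G n) X Xᶜ).ncard ≤ n ^ 2 + n := by
  set N : Set (ExtV V n) := (range extAux)ᶜ
  have hXc : Xᶜ ⊆ N := by
    rintro w hw ⟨j, rfl⟩
    exact hw (haux j)
  have hsub : crossSet (extGraph G n) X Xᶜ ⊆ (fun p => s(p.1, p.2)) '' ((N ∩ X) ×ˢ Xᶜ) := by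
    have hN : ∀ p q, (extGraph G n).Adj p q → q ∉ X → p ∈ N := by
      rintro p q hpq hq ⟨j, rfl⟩
      rcases extGraph_adj_extAux.1 hpq with rfl | rfl <;> contradiction
    intro e he
    induction e using Sym2.ind with
    | h p q =>
      obtain ⟨hadj, hside⟩ := mem_crossSet_compl.1 he
      by_cases hp : p ∈ X
      · exact ⟨(p, q), ⟨⟨hN p q hadj (hside.1 hp), hp⟩, hside.1 hp⟩, rfl⟩
      · have hq : q ∈ X := by tauto
        exact ⟨(q, p), ⟨⟨hN q p hadj.symm hp, hq⟩, hp⟩, Sym2.eq_swap⟩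
  have hsplit : (N ∩ X).ncard + Xᶜ.ncard = n + 2 := by
    have hN : N.ncard + n ^ 2 = n + (2 + n ^ 2) := by
      rw [ncard_compl, ncard_range_of_injective extAux_injective, Nat.card_eq_fintype_card]
      simp [hn]
      omega
    rw [← inter_eq_right.2 hXc, ← sdiff_eq, ncard_inter_add_ncard_sdiff_eq_ncard]
    omega
  have htwo : 2 ≤ (N ∩ X).ncard := by
    rw [← ncard_pair (extX_ne_extX' (V := V) (n := n))]
    refine ncard_le_ncard ?_
    rintro w (rfl | rfl)
    · exact ⟨by simp [N, extX, extAux], hx⟩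
    · exact ⟨by simp [N, extX', extAux], hx'⟩
  calc (crossSet (extGraph G n) X Xᶜ).ncard ≤ ((N ∩ X) ×ˢ Xᶜ).ncard :=
        (ncard_le_ncard hsub).trans (ncard_image_le (toFinite _))
    _ = (N ∩ X).ncard * Xᶜ.ncard := ncard_prod
    _ ≤ n ^ 2 + n := by nlinarith [Nat.le_mul_self Xᶜ.ncard]

lemma ncard_crossSet_extGraph_le [Fintype V] (hn : Fintype.card V = n) (hn1 : 1 ≤ n)
    {X : Set (ExtV V n)} (h : IsCocircuitPair (extGraph G n) X Xᶜ) (hx : extX ∈ X)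
    (hx' : extX' ∈ X) : (crossSet (extGraph G n) X Xᶜ).ncard ≤ n ^ 2 + n := by
  by_cases haux : ∃ j, extAux j ∉ X
  · obtain ⟨j, hj⟩ := haux
    have := ncard_crossSet_extGraph_le_two h hx hx' hj
    nlinarith
  · push Not at haux
    exact ncard_crossSet_extGraph_le_of_forall_extAux_mem hn hx hx' haux

lemma isCocircuitPair_extGraph_iff [Fintype V] (hn : Fintype.card V = n) (hn1 : 1 ≤ n)
    {k : ℕ} (hk : 1 ≤ k) {X : Set (ExtV V n)} (hx : extX ∈ X) :
    IsCocircuitPair (extGraph G n) X Xᶜ ∧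
        (crossSet (extGraph G n) X Xᶜ).ncard = n ^ 2 + n + k ↔
      extX' ∉ X ∧ IsCutPair (Sum.inl ⁻¹' X) (Sum.inl ⁻¹' X)ᶜ ∧
        (crossSet G (Sum.inl ⁻¹' X) (Sum.inl ⁻¹' X)ᶜ).ncard = k := by
  constructor
  · rintro ⟨hco, hsize⟩
    have hx' : extX' ∉ X := fun hx' => by
      have := ncard_crossSet_extGraph_le hn hn1 hco hx hx'
      omega
    have hsizeG := ncard_crossSet_extGraph (G := G) hx hx'
    refine ⟨hx', isCutPair_compl_of_crossSet_nonempty (G := G)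
      (nonempty_of_ncard_ne_zero ?_), ?_⟩ <;> omega
  · rintro ⟨hx', -, hsize⟩
    exact ⟨isCocircuitPair_extGraph hx hx', by rw [ncard_crossSet_extGraph hx hx', hn, hsize]⟩

def extShoreEquiv (Q : Set V → Prop) :
    {X : Set (ExtV V n) // extX ∈ X ∧ extX' ∉ X ∧ Q (Sum.inl ⁻¹' X)} ≃
      Set (Fin (n ^ 2)) × {A : Set V // Q A} where
  toFun X := (extAux ⁻¹' X.1, ⟨Sum.inl ⁻¹' X.1, X.2.2.2⟩)
  invFun SA := ⟨{w | Sum.elim (· ∈ SA.2.1) (Sum.elim (· = 0) (· ∈ SA.1)) w},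
    by simp [extX], by simp [extX'], SA.2.2⟩
  left_inv X := by
    ext w
    cases w using ExtV.cases with
    | inl a => rfl
    | x => simpa [extX] using X.2.1
    | x' => simpa [extX'] using X.2.2.1
    | aux j => rfl
  right_inv _ := rfl

end Extension

theorem stmt_8_general {V : Type*} [Fintype V] (G : SimpleGraph V)
    (n : ℕ) (hn : Fintype.card V = n) (hn1 : 1 ≤ n) (k : ℕ) (hk : 1 ≤ k) :
    Nat.card {p : Sym2 (Set (ExtV V n)) // ∃ X Y : Set (ExtV V n),
        p = s(X, Y) ∧ IsCocircuitPair (extGraph G n) X Y ∧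
          (crossSet (extGraph G n) X Y).ncard = n ^ 2 + n + k} =
      2 ^ (n ^ 2 + 1) *
        Nat.card {p : Sym2 (Set V) // ∃ X Y : Set V,
          p = s(X, Y) ∧ IsCutPair X Y ∧ (crossSet G X Y).ncard = k} := by
  obtain ⟨v₀⟩ : Nonempty V := by
    rw [← Fintype.card_pos_iff]
    omega
  let Q : Set V → Prop := fun A => IsCutPair A Aᶜ ∧ (crossSet G A Aᶜ).ncard = k
  have hQ : ∀ A, Q A → Q Aᶜ := fun A h =>
    ⟨(compl_compl A).symm ▸ h.1.symm, by rw [compl_compl, crossSet_comm, h.2]⟩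
  calc _ = Nat.card {X : Set (ExtV V n) // extX ∈ X ∧ IsCocircuitPair (extGraph G n) X Xᶜ ∧
          (crossSet (extGraph G n) X Xᶜ).ncard = n ^ 2 + n + k} :=
        card_sym2_eq_card_mem _ (fun _ _ h => h.1.1.eq_compl)
          (fun X Y h => ⟨h.1.symm, crossSet_comm _ Y X ▸ h.2⟩) extX
    _ = Nat.card {X : Set (ExtV V n) // extX ∈ X ∧ extX' ∉ X ∧ Q (Sum.inl ⁻¹' X)} :=
        Nat.card_congr <| Equiv.subtypeEquivRight fun X =>
          and_congr_right (isCocircuitPair_extGraph_iff hn hn1 hk)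
    _ = 2 ^ n ^ 2 * (2 * Nat.card {A : Set V // v₀ ∈ A ∧ Q A}) := by
        rw [Nat.card_congr (extShoreEquiv Q), Nat.card_prod, Nat.card_eq_fintype_card,
          Fintype.card_set, Fintype.card_fin, card_eq_two_mul_card_mem Q hQ v₀]
    _ = _ := by
        rw [card_sym2_eq_card_mem _ (fun _ _ h => h.1.eq_compl)
          (fun X Y h => ⟨h.1.symm, crossSet_comm _ Y X ▸ h.2⟩) v₀]
        ring

/-- The number of cocircuits of `G'` of size `n² + n + k` equals `2^(n²+1)` times the
number of cuts of `G` of size `k`. -/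
theorem stmt_8 {V : Type*} [Fintype V] (G : SimpleGraph V) (hG : G.Connected)
    (n : ℕ) (hn : Fintype.card V = n) (hn1 : 1 ≤ n) (k : ℕ) (hk : 1 ≤ k) :
    Nat.card {p : Sym2 (Set (ExtV V n)) // ∃ X Y : Set (ExtV V n),
        p = s(X, Y) ∧ IsCocircuitPair (extGraph G n) X Y ∧
          (crossSet (extGraph G n) X Y).ncard = n ^ 2 + n + k} =
      2 ^ (n ^ 2 + 1) *
        Nat.card {p : Sym2 (Set V) // ∃ X Y : Set V,
          p = s(X, Y) ∧ IsCutPair X Y ∧ (crossSet G X Y).ncard = k} :=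
  stmt_8_general G n hn hn1 k hk
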